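/- For every real p > 0, the function g(X) = Tr(X^{−p}) is convex on the convex cone of symmetric positive definite n×n real matrices: for all symmetric positive definite A, B and all γ ∈ [0,1], Tr((γA + (1−γ)B)^{−p}) ≤ γ·Tr(A^{−p}) + (1−γ)·Tr(B^{−p}). -/

import Mathlib

open Matrix

/-- Largest eigenvalue of a (Hermitian) real matrix. -/
noncomputable def eigMax {n : ℕ} (M : Matrix (Fin n) (Fin n) ℝ) : ℝ :=
  if h : M.IsHermitian then ⨆ i, h.eigenvalues i else 0

/-- Smallest eigenvalue of a (Hermitian) real matrix. -/
noncomputable def eigMin {n : ℕ} (M : Matrix (Fin n) (Fin n) ℝ) : ℝ :=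
  if h : M.IsHermitian then ⨅ i, h.eigenvalues i else 0

/-- Spectral norm (largest singular value) of a real matrix. -/
noncomputable def specNorm {m n : ℕ} (A : Matrix (Fin m) (Fin n) ℝ) : ℝ :=
  Real.sqrt (eigMax (Aᵀ * A))

/-- Real power of a symmetric matrix, via the spectral decomposition:
`M ^ r` has the same eigenvectors as `M` and eigenvalues `λᵢ ^ r`. -/
noncomputable def mpow {n : ℕ} (M : Matrix (Fin n) (Fin n) ℝ) (r : ℝ) :
    Matrix (Fin n) (Fin n) ℝ :=
  if h : M.IsHermitian then
    (h.eigenvectorUnitary : Matrix (Fin n) (Fin n) ℝ) *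
      Matrix.diagonal (fun i => h.eigenvalues i ^ r) *
      (star h.eigenvectorUnitary : Matrix (Fin n) (Fin n) ℝ)
  else 0

/-- Frobenius norm of a real matrix. -/
noncomputable def frobNorm {m n : ℕ} (M : Matrix (Fin m) (Fin n) ℝ) : ℝ :=
  Real.sqrt ((Mᵀ * M).trace)

/-!
Let `C = a • A + b • B` have orthonormal eigenvectors `eᵢ`, so that its eigenvalues are
`μᵢ = a ⟪eᵢ, A eᵢ⟫ + b ⟪eᵢ, B eᵢ⟫`. For a convex `f`, convexity gives
`f μᵢ ≤ a f ⟪eᵢ, A eᵢ⟫ + b f ⟪eᵢ, B eᵢ⟫`. Since `⟪eᵢ, A eᵢ⟫` is the average of the eigenvalues of `A`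
weighted by the squared coordinates of the unit vector `eᵢ` in an eigenbasis of `A`, Jensen's
inequality gives `f ⟪eᵢ, A eᵢ⟫ ≤ ⟪eᵢ, f(A) eᵢ⟫`. Summing over `i` yields `Tr f(C) ≤ a Tr f(A) + b Tr f(B)`, which we
apply to the convex function `x ↦ x ^ (-p)` on `(0, ∞)`.
-/

open Set

theorem convexOn_rpow_neg {p : ℝ} (hp : 0 < p) : ConvexOn ℝ (Ioi 0) fun x : ℝ ↦ x ^ (-p) := by
  refine convexOn_of_hasDerivWithinAt2_nonneg (convex_Ioi 0)
    (f' := fun x ↦ -p * x ^ (-p - 1)) (f'' := fun x ↦ -p * ((-p - 1) * x ^ (-p - 1 - 1)))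
    (fun x hx ↦ (Real.continuousAt_rpow_const _ _ (.inl hx.ne')).continuousWithinAt) ?_ ?_ ?_ <;>
    rw [interior_Ioi] <;> intro x (hx : 0 < x)
  · exact (Real.hasDerivAt_rpow_const (.inl hx.ne')).hasDerivWithinAt
  · exact ((Real.hasDerivAt_rpow_const (.inl hx.ne')).const_mul _).hasDerivWithinAt
  · have : 0 ≤ p * (p + 1) * x ^ (-p - 1 - 1) := by positivity
    linarith

theorem OrthonormalBasis.dotProduct_self_eq_one {ι : Type*} [Fintype ι]
    (b : OrthonormalBasis ι ℝ (EuclideanSpace ℝ ι)) (i : ι) : ⇑(b i) ⬝ᵥ ⇑(b i) = 1 := by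
  simpa only [EuclideanSpace.inner_eq_star_dotProduct, star_trivial] using b.inner_eq_one i

namespace Matrix

variable {ι : Type*}

theorem IsHermitian.smul_add_smul {A B : Matrix ι ι ℝ} (hA : A.IsHermitian) (hB : B.IsHermitian)
    (a b : ℝ) : (a • A + b • B).IsHermitian :=
  (hA.smul (IsSelfAdjoint.all a)).add (hB.smul (IsSelfAdjoint.all b))

variable [Fintype ι] [DecidableEq ι]

theorem trace_eq_sum_dotProduct_mulVec (N : Matrix ι ι ℝ)
    (b : OrthonormalBasis ι ℝ (EuclideanSpace ℝ ι)) : N.trace = ∑ i, ⇑(b i) ⬝ᵥ N *ᵥ ⇑(b i) := by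
  have hconj : toEuclideanLin N = (WithLp.linearEquiv 2 ℝ (ι → ℝ)).symm.conj (toLin' N) := rfl
  rw [← trace_toLin'_eq, ← LinearMap.trace_conj' _ (WithLp.linearEquiv 2 ℝ (ι → ℝ)).symm,
    ← hconj, LinearMap.trace_eq_sum_inner _ b]
  simp [EuclideanSpace.inner_eq_star_dotProduct, dotProduct_comm]

namespace IsHermitian

variable {M : Matrix ι ι ℝ}

theorem trace_cfc (hM : M.IsHermitian) (f : ℝ → ℝ) :
    (cfc f M).trace = ∑ i, f (hM.eigenvalues i) := by
  rw [hM.cfc_eq, IsHermitian.cfc, Unitary.conjStarAlgAut_apply, trace_mul_cycle,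
    Unitary.coe_star_mul_self, one_mul, trace_diagonal]
  rfl

theorem dotProduct_cfc_mulVec (hM : M.IsHermitian) (f : ℝ → ℝ) (v : ι → ℝ) :
    v ⬝ᵥ cfc f M *ᵥ v = ∑ j, (⇑(hM.eigenvectorBasis j) ⬝ᵥ v) ^ 2 * f (hM.eigenvalues j) := by
  have hstar : star (hM.eigenvectorUnitary : Matrix ι ι ℝ) = (hM.eigenvectorUnitary : Matrix ι ι ℝ)ᵀ :=
    conjTranspose_eq_transpose_of_trivial _
  have hcoord : (hM.eigenvectorUnitary : Matrix ι ι ℝ)ᵀ *ᵥ v =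
      fun j ↦ ⇑(hM.eigenvectorBasis j) ⬝ᵥ v := rfl
  rw [hM.cfc_eq, IsHermitian.cfc, Unitary.conjStarAlgAut_apply, ← mulVec_mulVec, ← mulVec_mulVec,
    dotProduct_mulVec, ← mulVec_transpose, hstar, hcoord]
  simp only [dotProduct, mulVec_diagonal]
  congr! 1 with j
  simp only [Function.comp_apply, RCLike.ofReal_real_eq_id, id]
  ring

-- `rw` does not match `cfc_const_one` / `cfc_id'` against this `cfc` (its instances are reached by
-- another path), hence the `show`s.
theorem sum_sq_dotProduct_eigenvectorBasis (hM : M.IsHermitian) (v : ι → ℝ) :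
    ∑ j, (⇑(hM.eigenvectorBasis j) ⬝ᵥ v) ^ 2 = v ⬝ᵥ v := by
  have h := hM.dotProduct_cfc_mulVec (fun _ ↦ 1) v
  rw [show cfc (fun _ : ℝ ↦ (1 : ℝ)) M = 1 from cfc_const_one ℝ M hM, one_mulVec] at h
  simpa using h.symm

theorem dotProduct_mulVec_eq_sum (hM : M.IsHermitian) (v : ι → ℝ) :
    v ⬝ᵥ M *ᵥ v = ∑ j, (⇑(hM.eigenvectorBasis j) ⬝ᵥ v) ^ 2 * hM.eigenvalues j := by
  simpa only [show cfc (fun x : ℝ ↦ x) M = M from cfc_id' ℝ M hM] using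
    hM.dotProduct_cfc_mulVec (fun x ↦ x) v

theorem dotProduct_mulVec_eigenvectorBasis (hM : M.IsHermitian) (i : ι) :
    ⇑(hM.eigenvectorBasis i) ⬝ᵥ M *ᵥ ⇑(hM.eigenvectorBasis i) = hM.eigenvalues i := by
  rw [mulVec_eigenvectorBasis, dotProduct_smul, OrthonormalBasis.dotProduct_self_eq_one,
    smul_eq_mul, mul_one]

end IsHermitian

end Matrix

open Matrix

variable {ι : Type*} [Fintype ι] [DecidableEq ι] {s : Set ℝ} {M : Matrix ι ι ℝ} {v : ι → ℝ}

theorem Convex.dotProduct_mulVec_mem (hs : Convex ℝ s) (hM : M.IsHermitian)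
    (hsM : ∀ i, hM.eigenvalues i ∈ s) (hv : v ⬝ᵥ v = 1) : v ⬝ᵥ M *ᵥ v ∈ s := by
  rw [hM.dotProduct_mulVec_eq_sum]
  exact hs.sum_mem (fun j _ ↦ sq_nonneg _) (by rw [hM.sum_sq_dotProduct_eigenvectorBasis, hv])
    fun j _ ↦ hsM j

theorem ConvexOn.map_dotProduct_mulVec_le {f : ℝ → ℝ} (hf : ConvexOn ℝ s f) (hM : M.IsHermitian)
    (hsM : ∀ i, hM.eigenvalues i ∈ s) (hv : v ⬝ᵥ v = 1) : f (v ⬝ᵥ M *ᵥ v) ≤ v ⬝ᵥ cfc f M *ᵥ v := by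
  rw [hM.dotProduct_mulVec_eq_sum, hM.dotProduct_cfc_mulVec]
  exact hf.map_sum_le (fun j _ ↦ sq_nonneg _)
    (by rw [hM.sum_sq_dotProduct_eigenvectorBasis, hv]) fun j _ ↦ hsM j

theorem ConvexOn.trace_cfc_smul_add_smul_le {f : ℝ → ℝ} (hf : ConvexOn ℝ s f)
    {A B : Matrix ι ι ℝ} (hA : A.IsHermitian) (hB : B.IsHermitian)
    (hsA : ∀ i, hA.eigenvalues i ∈ s) (hsB : ∀ i, hB.eigenvalues i ∈ s)
    {a b : ℝ} (ha : 0 ≤ a) (hb : 0 ≤ b) (hab : a + b = 1) :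
    (cfc f (a • A + b • B)).trace ≤ a * (cfc f A).trace + b * (cfc f B).trace := by
  have hC := hA.smul_add_smul hB a b
  let e := hC.eigenvectorBasis
  have he i : ⇑(e i) ⬝ᵥ ⇑(e i) = 1 := e.dotProduct_self_eq_one i
  have heig i : hC.eigenvalues i =
      a * (⇑(e i) ⬝ᵥ A *ᵥ ⇑(e i)) + b * (⇑(e i) ⬝ᵥ B *ᵥ ⇑(e i)) := by
    rw [← hC.dotProduct_mulVec_eigenvectorBasis]
    simp only [add_mulVec, smul_mulVec, dotProduct_add, dotProduct_smul, smul_eq_mul]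
    rfl
  calc (cfc f (a • A + b • B)).trace
      = ∑ i, f (a * (⇑(e i) ⬝ᵥ A *ᵥ ⇑(e i)) + b * (⇑(e i) ⬝ᵥ B *ᵥ ⇑(e i))) := by
        simp only [hC.trace_cfc, heig]
    _ ≤ ∑ i, (a * f (⇑(e i) ⬝ᵥ A *ᵥ ⇑(e i)) + b * f (⇑(e i) ⬝ᵥ B *ᵥ ⇑(e i))) :=
        Finset.sum_le_sum fun i _ ↦ hf.2 (hf.1.dotProduct_mulVec_mem hA hsA (he i))
          (hf.1.dotProduct_mulVec_mem hB hsB (he i)) ha hb hab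
    _ ≤ ∑ i, (a * (⇑(e i) ⬝ᵥ cfc f A *ᵥ ⇑(e i)) + b * (⇑(e i) ⬝ᵥ cfc f B *ᵥ ⇑(e i))) := by
        gcongr with i
        · exact hf.map_dotProduct_mulVec_le hA hsA (he i)
        · exact hf.map_dotProduct_mulVec_le hB hsB (he i)
    _ = a * (cfc f A).trace + b * (cfc f B).trace := by
        rw [Finset.sum_add_distrib, ← Finset.mul_sum, ← Finset.mul_sum,
          ← trace_eq_sum_dotProduct_mulVec, ← trace_eq_sum_dotProduct_mulVec]

theorem mpow_eq_cfc {n : ℕ} {M : Matrix (Fin n) (Fin n) ℝ} (hM : M.IsHermitian) (r : ℝ) :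
    mpow M r = cfc (fun x : ℝ ↦ x ^ r) M := by
  rw [mpow, dif_pos hM, hM.cfc_eq, IsHermitian.cfc, Unitary.conjStarAlgAut_apply]
  rfl

theorem trace_power_convex (n : ℕ) (p : ℝ) (hp : 0 < p)
    (A B : Matrix (Fin n) (Fin n) ℝ) (hA : A.PosDef) (hB : B.PosDef)
    (γ : ℝ) (hγ0 : 0 ≤ γ) (hγ1 : γ ≤ 1) :
    (mpow (γ • A + (1 - γ) • B) (-p)).trace ≤
      γ * (mpow A (-p)).trace + (1 - γ) * (mpow B (-p)).trace := by
  rw [mpow_eq_cfc (hA.1.smul_add_smul hB.1 γ (1 - γ)), mpow_eq_cfc hA.1, mpow_eq_cfc hB.1]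
  exact (convexOn_rpow_neg hp).trace_cfc_smul_add_smul_le hA.1 hB.1 hA.eigenvalues_pos
    hB.eigenvalues_pos hγ0 (sub_nonneg.2 hγ1) (add_sub_cancel γ 1)
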